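/- arXiv:1706.08228 — 4 statements merged into one kernel-verified Lean document; each statement's English description precedes it below -/
import Mathlib

section
/- The set W is closed under addition and multiplication and contains 1, i.e. W is a subring of R = ℤ × ℤ[√2] × ℤ[√3]; moreover, as a ℤ-module W is free of rank 5 with basis v₁ = (1, 1, 1), v₂ = (0, 2, 0), v₃ = (0, 0, 2), v₄ = (0, 2√2, 0), v₅ = (−1, −1+√2, 2−√3); that is, W = ℤv₁ + ℤv₂ + ℤv₃ + ℤv₄ + ℤv₅. -/
/-!
Reducing modulo `2` gives ring maps `ℤ[√2] → 𝔽₂[ε]` (`√2 ↦ ε`) and `ℤ[√3] → 𝔽₂[ε]` (`√3 ↦ 1 + ε`),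
in which the defining congruences of `W` say `b ≡ c` in `𝔽₂[ε]` and `a ≡ b mod (ε)` in `𝔽₂`.
So `W` is the equalizer of two ring homomorphisms out of `R`, hence a subring.
The basis statement is linear algebra over `ℤ`: the coordinates of `∑ cᵢ vᵢ` are triangular in `c`
with pivots `-1, 1, 2, 2, 2`, and the three pivots `2` account for the three congruences.
-/

abbrev Rng : Type := ℤ × Zsqrtd 2 × Zsqrtd 3

/-- The set `W` of triples `(a, b₁ + b₂√2, c₁ + c₂√3)` with
`a ≡ b₁ (mod 2)`, `a ≡ c₁ + c₂ (mod 2)` and `b₂ ≡ c₂ (mod 2)`. -/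
def Wset : Set Rng :=
  {p | p.1 ≡ p.2.1.re [ZMOD 2] ∧ p.1 ≡ p.2.2.re + p.2.2.im [ZMOD 2] ∧
       p.2.1.im ≡ p.2.2.im [ZMOD 2]}

/-- `v₁ = (1,1,1)`, `v₂ = (0,2,0)`, `v₃ = (0,0,2)`, `v₄ = (0, 2√2, 0)`,
`v₅ = (−1, −1+√2, 2−√3)`. -/
def v : Fin 5 → Rng :=
  ![((1 : ℤ), (⟨1, 0⟩ : Zsqrtd 2), (⟨1, 0⟩ : Zsqrtd 3)),
    ((0 : ℤ), (⟨2, 0⟩ : Zsqrtd 2), (⟨0, 0⟩ : Zsqrtd 3)),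
    ((0 : ℤ), (⟨0, 0⟩ : Zsqrtd 2), (⟨2, 0⟩ : Zsqrtd 3)),
    ((0 : ℤ), (⟨0, 2⟩ : Zsqrtd 2), (⟨0, 0⟩ : Zsqrtd 3)),
    ((-1 : ℤ), (⟨-1, 1⟩ : Zsqrtd 2), (⟨2, -1⟩ : Zsqrtd 3))]

namespace Zsqrtd

open DualNumber TrivSqZeroExt

variable {d : ℤ}

def modTwoOfEven (hd : Even d) : ℤ√d →+* DualNumber (ZMod 2) :=
  lift ⟨ε, by ext <;> simp [ZMod.intCast_eq_zero_iff_even.2 hd]⟩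

def modTwoOfOdd (hd : Odd d) : ℤ√d →+* DualNumber (ZMod 2) :=
  lift ⟨1 + ε, by ext <;> simp [ZMod.intCast_eq_one_iff_odd.2 hd, CharTwo.add_self_eq_zero]⟩

@[simp] lemma fst_modTwoOfEven (hd : Even d) (z : ℤ√d) : (modTwoOfEven hd z).fst = z.re := by
  simp [modTwoOfEven, lift_apply_apply]

@[simp] lemma snd_modTwoOfEven (hd : Even d) (z : ℤ√d) : (modTwoOfEven hd z).snd = z.im := by
  simp [modTwoOfEven, lift_apply_apply]

@[simp] lemma fst_modTwoOfOdd (hd : Odd d) (z : ℤ√d) : (modTwoOfOdd hd z).fst = z.re + z.im := by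
  simp [modTwoOfOdd, lift_apply_apply]

@[simp] lemma snd_modTwoOfOdd (hd : Odd d) (z : ℤ√d) : (modTwoOfOdd hd z).snd = z.im := by
  simp [modTwoOfOdd, lift_apply_apply]

end Zsqrtd

open Zsqrtd

def modTwoLeft : Rng →+* ZMod 2 × DualNumber (ZMod 2) :=
  ((Int.castRingHom _).comp (RingHom.fst _ _)).prod
    ((modTwoOfEven even_two).comp ((RingHom.fst _ _).comp (RingHom.snd _ _)))

def modTwoRight : Rng →+* ZMod 2 × DualNumber (ZMod 2) :=
  ((TrivSqZeroExt.fstHom ℤ (ZMod 2) (ZMod 2)).toRingHom.comp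
      ((modTwoOfEven even_two).comp ((RingHom.fst _ _).comp (RingHom.snd _ _)))).prod
    ((modTwoOfOdd (by decide)).comp ((RingHom.snd _ _).comp (RingHom.snd _ _)))

@[simp] lemma modTwoLeft_apply (x : Rng) :
    modTwoLeft x = ((x.1 : ZMod 2), modTwoOfEven even_two x.2.1) := rfl

@[simp] lemma modTwoRight_apply (x : Rng) :
    modTwoRight x = ((modTwoOfEven even_two x.2.1).fst, modTwoOfOdd (by decide) x.2.2) := rfl

lemma coe_eqLocus_modTwo : (modTwoLeft.eqLocus modTwoRight : Set Rng) = Wset := by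
  have modEq_two_iff (a b : ℤ) : a ≡ b [ZMOD 2] ↔ (a : ZMod 2) = b :=
    (ZMod.intCast_eq_intCast_iff a b 2).symm
  ext x
  simp only [Wset, Set.mem_ofPred_eq, modEq_two_iff, Int.cast_add, SetLike.mem_coe,
    RingHom.mem_eqLocus, modTwoLeft_apply, modTwoRight_apply, Prod.ext_iff, TrivSqZeroExt.ext_iff,
    fst_modTwoOfEven, snd_modTwoOfEven, fst_modTwoOfOdd, snd_modTwoOfOdd]
  exact and_congr_right fun h => by rw [h]

def W : Subring Rng := (modTwoLeft.eqLocus modTwoRight).copy Wset coe_eqLocus_modTwo.symm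

lemma sum_smul_v (c : Fin 5 → ℤ) : ∑ i, c i • v i =
    (c 0 - c 4, ⟨c 0 + 2 * c 1 - c 4, 2 * c 3 + c 4⟩, ⟨c 0 + 2 * c 2 + 2 * c 4, -c 4⟩) := by
  ext <;> simp [Fin.sum_univ_five, v] <;> ring

lemma v_mem_Wset (i : Fin 5) : v i ∈ Wset := by
  simp only [Wset, Set.mem_ofPred_eq]
  fin_cases i <;> decide

lemma linearIndependent_v : LinearIndependent ℤ v := by
  refine Fintype.linearIndependent_iff.2 fun c hc i => ?_
  simp only [sum_smul_v, Prod.ext_iff, Zsqrtd.ext_iff, Prod.fst_zero, Prod.snd_zero,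
    Zsqrtd.re_zero, Zsqrtd.im_zero] at hc
  obtain ⟨h₀, h₁, h₂, h₃, h₄⟩ : c 0 = 0 ∧ c 1 = 0 ∧ c 2 = 0 ∧ c 3 = 0 ∧ c 4 = 0 := by omega
  fin_cases i <;> assumption

lemma mem_Wset_iff_exists_sum_smul_v (x : Rng) :
    x ∈ Wset ↔ ∃ c : Fin 5 → ℤ, x = ∑ i, c i • v i := by
  constructor
  · rintro ⟨h₁, h₂, h₃⟩
    obtain ⟨k₁, hk₁⟩ := h₁.dvd
    obtain ⟨k₂, hk₂⟩ := h₂.dvd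
    obtain ⟨k₃, hk₃⟩ := h₃.dvd
    refine ⟨![x.1 - x.2.2.im, k₁, k₂ + x.2.2.im, x.2.2.im - k₃, -x.2.2.im], ?_⟩
    rw [sum_smul_v]
    ext <;> simp only [Matrix.cons_val_zero, Matrix.cons_val_one, Matrix.cons_val] <;> omega
  · rintro ⟨c, rfl⟩
    exact W.sum_mem fun i _ => W.zsmul_mem (v_mem_Wset i) (c i)

/-- `W` is closed under addition and multiplication and contains `1`, i.e. it is a subring of
`R = ℤ × ℤ[√2] × ℤ[√3]`; moreover as a `ℤ`-module it is free of rank `5` with basis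
`v₁, v₂, v₃, v₄, v₅`, i.e. `W = ℤv₁ + ℤv₂ + ℤv₃ + ℤv₄ + ℤv₅` and the `vᵢ` are
`ℤ`-linearly independent. -/
theorem stmt0 :
    (1 : Rng) ∈ Wset ∧
    (∀ x ∈ Wset, ∀ y ∈ Wset, x + y ∈ Wset) ∧
    (∀ x ∈ Wset, ∀ y ∈ Wset, x * y ∈ Wset) ∧
    (∃ S : Subring Rng, (S : Set Rng) = Wset) ∧
    LinearIndependent ℤ v ∧
    (∀ x : Rng, x ∈ Wset ↔ ∃ c : Fin 5 → ℤ, x = ∑ i, c i • v i) :=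
  ⟨W.one_mem, fun _ hx _ hy => W.add_mem hx hy, fun _ hx _ hy => W.mul_mem hx hy, ⟨W, rfl⟩,
    linearIndependent_v, mem_Wset_iff_exists_sum_smul_v⟩
end

section
/- The ℤ-submodule of R = ℤ × ℤ[√2] × ℤ[√3] spanned by the five elements T₁ = (1, 1, 1), T₂ = (−1, −1+√2, √3), T₃ = (−2, √2, 1−√3), T₅ = (−1, 1, −1), T₁₁ = (2, 2−√2, −3+√3) equals W; in particular, these five elements are ℤ-linearly independent and form a ℤ-basis of W. -/
/-- `T₁ = (1,1,1)`, `T₂ = (−1, −1+√2, √3)`, `T₃ = (−2, √2, 1−√3)`, `T₅ = (−1, 1, −1)`,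
`T₁₁ = (2, 2−√2, −3+√3)`. -/
def T : Fin 5 → Rng :=
  ![((1 : ℤ), (⟨1, 0⟩ : Zsqrtd 2), (⟨1, 0⟩ : Zsqrtd 3)),
    ((-1 : ℤ), (⟨-1, 1⟩ : Zsqrtd 2), (⟨0, 1⟩ : Zsqrtd 3)),
    ((-2 : ℤ), (⟨0, 1⟩ : Zsqrtd 2), (⟨1, -1⟩ : Zsqrtd 3)),
    ((-1 : ℤ), (⟨1, 0⟩ : Zsqrtd 2), (⟨-1, 0⟩ : Zsqrtd 3)),
    ((2 : ℤ), (⟨2, -1⟩ : Zsqrtd 2), (⟨-3, 1⟩ : Zsqrtd 3))]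

theorem sum_smul_T (g : Fin 5 → ℤ) :
    ∑ i, g i • T i =
      (g 0 - g 1 - 2 * g 2 - g 3 + 2 * g 4,
        (⟨g 0 - g 1 + g 3 + 2 * g 4, g 1 + g 2 - g 4⟩ : Zsqrtd 2),
        (⟨g 0 + g 2 - g 3 - 3 * g 4, g 1 - g 2 + g 4⟩ : Zsqrtd 3)) := by
  simp only [Fin.sum_univ_five, T]
  ext <;> simp <;> ring

theorem mk_mem_Wset_iff (a : ℤ) (b : Zsqrtd 2) (c : Zsqrtd 3) :
    (a, b, c) ∈ Wset ↔ 2 ∣ a - b.re ∧ 2 ∣ a - (c.re + c.im) ∧ 2 ∣ b.im - c.im := by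
  simp only [Wset, Set.mem_ofPred_eq, Int.modEq_iff_dvd, dvd_sub_comm]

theorem mem_span_T_iff (x : Rng) : x ∈ Submodule.span ℤ (Set.range T) ↔ x ∈ Wset := by
  obtain ⟨a, b, c⟩ := x
  rw [Submodule.mem_span_range_iff_exists_fun, mk_mem_Wset_iff]
  constructor
  · rintro ⟨g, hg⟩
    simp only [sum_smul_T, Prod.mk.injEq, Zsqrtd.ext_iff] at hg
    omega
  · rintro ⟨⟨j, hj⟩, ⟨k, hk⟩, ⟨l, hl⟩⟩
    refine ⟨![a - j - k, c.im + l, k + c.im + 3 * l, -(j + k + c.im + 3 * l),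
      k + c.im + 2 * l], ?_⟩
    simp only [sum_smul_T, Prod.mk.injEq, Zsqrtd.ext_iff, Matrix.cons_val_zero,
      Matrix.cons_val_one, Matrix.cons_val]
    omega

theorem linearIndependent_T : LinearIndependent ℤ T := by
  rw [Fintype.linearIndependent_iff]
  intro g hg i
  simp only [sum_smul_T, Prod.ext_iff, Zsqrtd.ext_iff, Prod.fst_zero, Prod.snd_zero,
    Zsqrtd.re_zero, Zsqrtd.im_zero] at hg
  fin_cases i <;> simp only [Fin.zero_eta, Fin.mk_one, Fin.reduceFinMk] <;> omega

/-- The `ℤ`-submodule of `R = ℤ × ℤ[√2] × ℤ[√3]` spanned by `T₁, T₂, T₃, T₅, T₁₁` equals `W`;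
in particular these five elements are `ℤ`-linearly independent, so they form a `ℤ`-basis
of `W`. -/
theorem stmt1 :
    (Submodule.span ℤ (Set.range T) : Set Rng) = Wset ∧ LinearIndependent ℤ T :=
  ⟨Set.ext mem_span_T_iff, linearIndependent_T⟩
end

section
/- In the Gaussian integers O = ℤ[i], let O′ := {a + 3b·i : a, b ∈ ℤ}, a subring of O, and let m := (2+i)·O. Then: (1) m is a maximal ideal of O and O/m has exactly 5 elements; (2) the ideal J of O′ generated by 5 and 1 + 3i satisfies J = m ∩ O′ and its extension to O is m, i.e. the ideal of O generated by 5 and 1 + 3i equals m; (3) J is not a principal ideal of O′. -/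
open Zsqrtd

/-- The order `O′ = ℤ + 3iℤ = {a + 3b·i : a, b ∈ ℤ}` inside the Gaussian integers. -/
def Oo : Subring GaussianInt where
  carrier := {z | (3 : ℤ) ∣ z.im}
  zero_mem' := ⟨0, rfl⟩
  one_mem' := ⟨0, rfl⟩
  add_mem' := by
    intro a b ha hb
    exact dvd_add ha hb
  neg_mem' := by
    intro a ha
    simpa using ha.neg_right
  mul_mem' := by
    intro a b ha hb
    simp only [Set.mem_setOf_eq, Zsqrtd.im_mul] at *
    exact dvd_add (hb.mul_left _) (ha.mul_right _)

/-- The maximal ideal `m = (2+i)·O` of the Gaussian integers. -/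
def mIdeal : Ideal GaussianInt := Ideal.span {(⟨2, 1⟩ : GaussianInt)}

/-- `5` as an element of `O′`. -/
def f5 : Oo := ⟨(⟨5, 0⟩ : GaussianInt), ⟨0, rfl⟩⟩

/-- `1 + 3i` as an element of `O′`. -/
def f13 : Oo := ⟨(⟨1, 3⟩ : GaussianInt), ⟨1, rfl⟩⟩

/-- The ideal `J = (5, 1+3i)` of `O′`. -/
def J : Ideal Oo := Ideal.span {f5, f13}

/-!
Reduction modulo `2 + i` is the ring map `ℤ[i] → ℤ/5` sending `i ↦ 3` (as `3² = -1` in `ℤ/5`);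
its kernel is `m`, which gives (1). Every element of `m ∩ O′` is an `O′`-combination of `5` and
`1 + 3i`, which gives (2). If `J = (g)`, then `N g` divides `N 5 = 25` and `N (1 + 3i) = 10`, and
is divisible by `N (2 + i) = 5` since `g ∈ m`; so `N g = 5`, while norms of elements of `O′` have
the form `a² + 9b²`, which never equals `5`.
-/

lemma mem_mIdeal_iff (z : GaussianInt) : z ∈ mIdeal ↔ (5 : ℤ) ∣ z.re + 3 * z.im := by
  rw [mIdeal, Ideal.mem_span_singleton]
  constructor
  · rintro ⟨c, rfl⟩
    exact ⟨c.re + c.im, by simp only [re_mul, im_mul]; ring⟩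
  · rintro ⟨k, hk⟩
    refine ⟨⟨2 * k - z.im, z.im - k⟩, ?_⟩
    ext <;> simp only [re_mul, im_mul] <;> omega

lemma five_dvd_norm_of_mem_mIdeal {z : GaussianInt} (hz : z ∈ mIdeal) : (5 : ℤ) ∣ z.norm := by
  obtain ⟨c, rfl⟩ := Ideal.mem_span_singleton.mp hz
  exact ⟨c.norm, by rw [norm_mul]; rfl⟩

noncomputable def reduceModTwoAddI : GaussianInt →+* ZMod 5 := Zsqrtd.lift ⟨3, by decide⟩

lemma ker_reduceModTwoAddI : RingHom.ker reduceModTwoAddI = mIdeal := by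
  ext z
  have hcast : ((z.re + 3 * z.im : ℤ) : ZMod 5) = reduceModTwoAddI z := by
    change _ = (z.re : ZMod 5) + z.im * 3
    push_cast
    ring
  rw [RingHom.mem_ker, ← hcast, ZMod.intCast_zmod_eq_zero_iff_dvd, mem_mIdeal_iff]
  norm_num

lemma reduceModTwoAddI_surjective : Function.Surjective reduceModTwoAddI := fun n => by
  obtain ⟨k, rfl⟩ := ZMod.intCast_surjective n
  exact ⟨k, map_intCast reduceModTwoAddI k⟩

noncomputable def quotientMIdealEquiv : (GaussianInt ⧸ mIdeal) ≃+* ZMod 5 :=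
  (Ideal.quotEquivOfEq ker_reduceModTwoAddI.symm).trans
    (RingHom.quotientKerEquivOfSurjective reduceModTwoAddI_surjective)

lemma mIdeal_isMaximal : mIdeal.IsMaximal :=
  haveI : Fact (Nat.Prime 5) := ⟨by norm_num⟩
  Ideal.Quotient.maximal_of_isField _
    (quotientMIdealEquiv.toMulEquiv.isField (Field.toIsField (ZMod 5)))

lemma card_quotient_mIdeal : Nat.card (GaussianInt ⧸ mIdeal) = 5 := by
  rw [Nat.card_congr quotientMIdealEquiv.toEquiv, Nat.card_zmod]

lemma span_five_one_add_three_i_eq_mIdeal :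
    Ideal.span {(⟨5, 0⟩ : GaussianInt), (⟨1, 3⟩ : GaussianInt)} = mIdeal := by
  apply _root_.le_antisymm
  · rw [Ideal.span_le]
    rintro z (rfl | rfl) <;> rw [SetLike.mem_coe, mem_mIdeal_iff] <;> decide
  · rw [mIdeal, Ideal.span_le, Set.singleton_subset_iff, SetLike.mem_coe, Ideal.mem_span_pair]
    -- `2 + i = 1 · 5 + i · (1 + 3i)`
    exact ⟨1, ⟨0, 1⟩, by decide⟩

lemma map_J_eq_mIdeal : J.map Oo.subtype = mIdeal := by
  rw [J, Ideal.map_span, Set.image_pair]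
  exact span_five_one_add_three_i_eq_mIdeal

lemma comap_mIdeal_le_J : Ideal.comap Oo.subtype mIdeal ≤ J := by
  rintro ⟨z, c, hc⟩ hz
  change z ∈ mIdeal at hz
  rw [mem_mIdeal_iff] at hz
  -- `z = z.re + 3c·i` with `5 ∣ z.re + 9c`, i.e. `5 ∣ c - z.re`; write `c - z.re = 5k`
  obtain ⟨k, hk⟩ : (5 : ℤ) ∣ c - z.re := by omega
  rw [J, Ideal.mem_span_pair]
  refine ⟨⟨⟨0, 3 * k⟩, ⟨k, rfl⟩⟩, ⟨⟨z.re, 0⟩, dvd_zero 3⟩, Subtype.ext ?_⟩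
  change (⟨0, 3 * k⟩ : GaussianInt) * ⟨5, 0⟩ + ⟨z.re, 0⟩ * ⟨1, 3⟩ = z
  ext <;> simp only [re_add, im_add, re_mul, im_mul] <;> omega

lemma J_eq_comap_mIdeal : J = Ideal.comap Oo.subtype mIdeal :=
  _root_.le_antisymm (Ideal.map_le_iff_le_comap.mp map_J_eq_mIdeal.le) comap_mIdeal_le_J

lemma norm_ne_five_of_mem_Oo (z : Oo) : (z : GaussianInt).norm ≠ 5 := by
  obtain ⟨z, b, hb⟩ := z
  change z.norm ≠ 5
  rw [norm_def, hb]
  intro h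
  have hb0 : b = 0 := by nlinarith [mul_self_nonneg z.re, mul_self_nonneg b]
  subst hb0
  have : z.re ≤ 2 := by nlinarith
  have : -2 ≤ z.re := by nlinarith
  interval_cases z.re <;> omega

lemma norm_dvd_five_of_dvd {g : GaussianInt} (h5 : g ∣ ⟨5, 0⟩) (h13 : g ∣ ⟨1, 3⟩) :
    g.norm ∣ 5 := by
  have h25 : g.norm ∣ 25 := map_dvd normMonoidHom h5
  have h10 : g.norm ∣ 10 := map_dvd normMonoidHom h13
  simpa using h25.sub (h10.mul_left 2)

lemma J_not_isPrincipal : ¬ J.IsPrincipal := by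
  rintro ⟨g, hg⟩
  have hdvd : ∀ x ∈ J, (g : GaussianInt) ∣ x := fun x hx => by
    rw [hg, Ideal.submodule_span_eq, Ideal.mem_span_singleton] at hx
    exact map_dvd Oo.subtype hx
  have hg_mem : g ∈ J := hg ▸ Submodule.mem_span_singleton_self g
  rw [J_eq_comap_mIdeal] at hg_mem
  refine norm_ne_five_of_mem_Oo g (Int.dvd_antisymm (GaussianInt.norm_nonneg _) (by norm_num)
    (norm_dvd_five_of_dvd ?_ ?_) (five_dvd_norm_of_mem_mIdeal hg_mem))
  · exact hdvd f5 (Ideal.subset_span (by simp))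
  · exact hdvd f13 (Ideal.subset_span (by simp))

/-- In `O = ℤ[i]` with order `O′ = ℤ + 3iℤ` and `m = (2+i)O`:
(1) `m` is maximal and `O/m` has exactly `5` elements;
(2) the ideal `J = (5, 1+3i)` of `O′` satisfies `J = m ∩ O′`, and the ideal of `O`
generated by `5` and `1+3i` equals `m`;
(3) `J` is not a principal ideal of `O′`. -/
theorem stmt13 :
    (mIdeal.IsMaximal ∧ Nat.card (GaussianInt ⧸ mIdeal) = 5) ∧
    (J = Ideal.comap Oo.subtype mIdeal ∧
      Ideal.span {(⟨5, 0⟩ : GaussianInt), (⟨1, 3⟩ : GaussianInt)} = mIdeal) ∧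
    ¬ J.IsPrincipal :=
  ⟨⟨mIdeal_isMaximal, card_quotient_mIdeal⟩,
    ⟨J_eq_comap_mIdeal, span_five_one_add_three_i_eq_mIdeal⟩, J_not_isPrincipal⟩
end

section
/- The quotient ring ℤ[x]/((x − 1)(x² + x − 4)) is isomorphic, as a ring, to the subring {(a, b + cα) ∈ ℤ × A : a, b, c ∈ ℤ, a ≡ b + c (mod 2)} of ℤ × A, where A := ℤ[y]/(y² + y − 4) and α denotes the class of y in A; the isomorphism sends the class of x to (1, α). -/
/-!
Let `g = X² + X − 4`. The ring map `ℤ[X] → ℤ × ℤ[X]/(g)`, `p ↦ (p(1), p mod g)`, sends `X` to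
`(1, α)`. Its kernel is `(X − 1) ∩ (g) = ((X − 1) g)`, because `g(1) = −2` is a non-zero-divisor.
Reducing `p` modulo the monic `g` to `b + cX` shows that its image consists of the pairs
`(a, b + cα)` with `g(1) ∣ a − (b + c)`, i.e. `a ≡ b + c (mod 2)`.
-/

open Polynomial

/-- The ring `A = ℤ[y]/(y² + y − 4) = ℤ[α]`, the ring of integers of `ℚ(√17)`. -/
noncomputable abbrev A16 : Type := Polynomial ℤ ⧸ Ideal.span {(X : Polynomial ℤ) ^ 2 + X - 4}

/-- `α`, the class of `y` in `A = ℤ[y]/(y² + y − 4)`. -/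
noncomputable def alpha : A16 :=
  Ideal.Quotient.mk (Ideal.span {(X : Polynomial ℤ) ^ 2 + X - 4}) X

/-- The ideal `((x − 1)(x² + x − 4))` of `ℤ[x]`. -/
noncomputable def I35 : Ideal (Polynomial ℤ) :=
  Ideal.span {(X - 1) * (X ^ 2 + X - 4)}

namespace Polynomial

variable {R : Type*} [CommRing R]

noncomputable def evalProdMk (a : R) (g : R[X]) : R[X] →+* R × (R[X] ⧸ Ideal.span {g}) :=
  (evalRingHom a).prod (Ideal.Quotient.mk _)

theorem span_X_sub_C_inf_span_singleton {a : R} {g : R[X]} (hg : g.eval a ∈ nonZeroDivisors R) :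
    Ideal.span {X - C a} ⊓ Ideal.span {g} = Ideal.span {(X - C a) * g} := by
  refine le_antisymm ?_ (le_inf ?_ ?_)
  · rintro p ⟨hp, hpg⟩
    obtain ⟨q, rfl⟩ := Ideal.mem_span_singleton.mp hpg
    have hq : q.eval a = 0 := by
      refine mem_nonZeroDivisors_iff_right.mp hg (q.eval a) ?_
      rw [mul_comm, ← eval_mul, ← IsRoot.def, ← dvd_iff_isRoot, ← Ideal.mem_span_singleton]
      exact hp
    obtain ⟨r, rfl⟩ := dvd_iff_isRoot.mpr hq
    exact Ideal.mem_span_singleton.mpr ⟨r, by ring⟩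
  · exact Ideal.span_singleton_le_span_singleton.mpr (dvd_mul_right _ _)
  · exact Ideal.span_singleton_le_span_singleton.mpr (dvd_mul_left _ _)

theorem ker_evalProdMk {a : R} {g : R[X]} (hg : g.eval a ∈ nonZeroDivisors R) :
    RingHom.ker (evalProdMk a g) = Ideal.span {(X - C a) * g} := by
  rw [← span_X_sub_C_inf_span_singleton hg, ← ker_evalRingHom]
  ext p
  simp [evalProdMk, Ideal.Quotient.eq_zero_iff_mem]

theorem mem_range_evalProdMk [Nontrivial R] {a : R} {g : R[X]} (hg : g.Monic) {u : R}
    {v : R[X] ⧸ Ideal.span {g}} :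
    (u, v) ∈ (evalProdMk a g).range ↔
      ∃ r : R[X], r.degree < g.degree ∧ Ideal.Quotient.mk _ r = v ∧ g.eval a ∣ u - r.eval a := by
  constructor
  · rintro ⟨p, hp⟩
    simp only [evalProdMk, RingHom.prod_apply, coe_evalRingHom, Prod.mk.injEq] at hp
    obtain ⟨rfl, rfl⟩ := hp
    refine ⟨p %ₘ g, degree_modByMonic_lt p hg, ?_, ⟨(p /ₘ g).eval a, ?_⟩⟩
    · rw [Ideal.Quotient.eq, Ideal.mem_span_singleton]
      exact ⟨-(p /ₘ g), by linear_combination modByMonic_add_div p g⟩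
    · rw [← eval_mul, ← eval_sub, modByMonic_eq_sub_mul_div]
      ring_nf
  · rintro ⟨r, -, rfl, k, hk⟩
    refine ⟨r + C k * g, Prod.ext ?_ ?_⟩
    · simp only [evalProdMk, RingHom.prod_apply, coe_evalRingHom, eval_add, eval_mul, eval_C]
      rw [mul_comm, ← hk, add_sub_cancel]
    · simp [evalProdMk, Ideal.Quotient.mk_singleton_self]

end Polynomial

theorem monic_X_sq_add_X_sub_four : ((X : ℤ[X]) ^ 2 + X - 4).Monic := by
  monicity!

theorem degree_X_sq_add_X_sub_four : ((X : ℤ[X]) ^ 2 + X - 4).degree = 2 := by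
  compute_degree!

theorem mk_C_mul_X_add_C (b c : ℤ) :
    Ideal.Quotient.mk (Ideal.span {(X : ℤ[X]) ^ 2 + X - 4}) (C c * X + C b) =
      (b : A16) + (c : A16) * alpha := by
  simp [alpha, add_comm]

theorem ker_evalProdMk_one : RingHom.ker (evalProdMk (1 : ℤ) ((X : ℤ[X]) ^ 2 + X - 4)) = I35 := by
  rw [ker_evalProdMk (mem_nonZeroDivisors_of_ne_zero (by norm_num)), map_one, I35]

theorem mem_range_evalProdMk_one {u : ℤ} {v : A16} :
    (u, v) ∈ (evalProdMk (1 : ℤ) ((X : ℤ[X]) ^ 2 + X - 4)).range ↔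
      ∃ b c : ℤ, v = (b : A16) + (c : A16) * alpha ∧ u ≡ b + c [ZMOD 2] := by
  have hdvd (b c : ℤ) : ((X : ℤ[X]) ^ 2 + X - 4).eval 1 ∣ u - (C c * X + C b).eval 1 ↔
      u ≡ b + c [ZMOD 2] := by
    norm_num [Int.modEq_iff_dvd, dvd_sub_comm, add_comm]
  rw [mem_range_evalProdMk monic_X_sq_add_X_sub_four, degree_X_sq_add_X_sub_four]
  constructor
  · rintro ⟨r, hr, rfl, hu⟩
    obtain ⟨c, b, rfl⟩ := exists_eq_X_add_C_of_natDegree_le_one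
      (natDegree_le_of_degree_le (Order.le_of_lt_succ hr))
    exact ⟨b, c, mk_C_mul_X_add_C b c, (hdvd b c).mp hu⟩
  · rintro ⟨b, c, rfl, hu⟩
    exact ⟨C c * X + C b, by compute_degree!, mk_C_mul_X_add_C b c, (hdvd b c).mpr hu⟩

/-- `ℤ[x]/((x − 1)(x² + x − 4))` is isomorphic as a ring to the subring
`{(a, b + cα) ∈ ℤ × A : a ≡ b + c (mod 2)}` of `ℤ × A`, where `A = ℤ[y]/(y² + y − 4)`
and `α` is the class of `y`; the isomorphism sends the class of `x` to `(1, α)`. -/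
theorem stmt16 :
    ∃ S : Subring (ℤ × A16),
      (S : Set (ℤ × A16)) =
        {p | ∃ b c : ℤ, p.2 = (b : A16) + (c : A16) * alpha ∧ p.1 ≡ b + c [ZMOD 2]} ∧
      ∃ e : (Polynomial ℤ ⧸ I35) ≃+* S,
        ((e (Ideal.Quotient.mk I35 X) : ℤ × A16)) = ((1 : ℤ), alpha) := by
  set φ := evalProdMk (1 : ℤ) ((X : ℤ[X]) ^ 2 + X - 4)
  refine ⟨φ.range, Set.ext fun _ => mem_range_evalProdMk_one, ?_⟩
  refine ⟨(Ideal.quotEquivOfEq ker_evalProdMk_one.symm).trans (RingHom.quotientKerEquivRange φ), ?_⟩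
  change φ X = (1, alpha)
  simp [φ, evalProdMk, alpha]
end
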